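/- For a set P of n ≥ 5 points in convex position, every intersection max-clique of the path graph G(P) has size 2 or 4. -/

import Mathlib

namespace PG

/-- The `k`-th vertex (mod `n`) of the convex polygon. -/
def pt (n : ℕ) (hn : 0 < n) (k : ℕ) : Fin n := ⟨k % n, Nat.mod_lt _ hn⟩

/-- `e` is a boundary (convex hull) edge of the convex `n`-gon. -/
def IsHullEdge {n : ℕ} (e : Sym2 (Fin n)) : Prop :=
  ∃ a b : Fin n, e = s(a, b) ∧ ((a.val + 1) % n = b.val ∨ (b.val + 1) % n = a.val)

instance {n : ℕ} : DecidablePred (IsHullEdge (n := n)) := fun _ => by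
  unfold IsHullEdge; infer_instance

/-- Two chords of the convex `n`-gon cross (intersect in interior points):
their endpoint pairs are all distinct and separate each other in the cyclic order. -/
def Crosses {n : ℕ} (e f : Sym2 (Fin n)) : Prop :=
  ∃ a b c d : Fin n, e = s(a, b) ∧ f = s(c, d) ∧
    a ≠ b ∧ c ≠ d ∧ a ≠ c ∧ a ≠ d ∧ b ≠ c ∧ b ≠ d ∧
    (((c.val + n - a.val) % n < (b.val + n - a.val) % n) ↔
      ¬((d.val + n - a.val) % n < (b.val + n - a.val) % n))

instance {n : ℕ} (e f : Sym2 (Fin n)) : Decidable (Crosses e f) := by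
  unfold Crosses; infer_instance

/-- The edge set of the spanning path visiting the points in the order given
by the permutation `p`. -/
def pathEdges {n : ℕ} (p : Equiv.Perm (Fin n)) : Finset (Sym2 (Fin n)) :=
  Finset.univ.filter (fun e => ∃ i j : Fin n, e = s(p i, p j) ∧ j.val = i.val + 1)

/-- `E` is the edge set of a non-crossing (plane) spanning path. -/
def IsNCPath {n : ℕ} (E : Finset (Sym2 (Fin n))) : Prop :=
  (∃ p : Equiv.Perm (Fin n), E = pathEdges p) ∧ ∀ e ∈ E, ∀ f ∈ E, ¬ Crosses e f

instance {n : ℕ} : DecidablePred (IsNCPath (n := n)) := fun _ => by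
  unfold IsNCPath pathEdges; infer_instance

/-- Vertices of the path graph `G(P)`: non-crossing spanning paths. -/
def PVert (n : ℕ) := {E : Finset (Sym2 (Fin n)) // IsNCPath E}

instance {n : ℕ} : Fintype (PVert n) := Subtype.fintype _
instance {n : ℕ} : DecidableEq (PVert n) := Subtype.instDecidableEq

/-- The path graph `G(P)`: two plane spanning paths are adjacent iff their
edge sets differ in exactly two edges. -/
def pathGraph (n : ℕ) : SimpleGraph (PVert n) where
  Adj u v := u ≠ v ∧ (u.1 \ v.1 ∪ v.1 \ u.1).card = 2
  symm := by constructor; rintro u v ⟨h1, h2⟩; exact ⟨h1.symm, by rwa [Finset.union_comm]⟩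
  loopless := by constructor; rintro u ⟨h, _⟩; exact h rfl

instance {n : ℕ} : DecidableRel (pathGraph n).Adj := fun u v => by
  unfold pathGraph; infer_instance

/-- `v` is a boundary path: all its edges are hull edges. -/
def IsBoundary {n : ℕ} (v : PVert n) : Prop := ∀ e ∈ v.1, IsHullEdge e

/-- Number of diagonals (the level) of a path. -/
def diagCount {n : ℕ} (v : PVert n) : ℕ :=
  (v.1.filter (fun e => ¬ IsHullEdge e)).card

/-- Degree of a point in an edge set. -/
def degIn {n : ℕ} (E : Finset (Sym2 (Fin n))) (x : Fin n) : ℕ :=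
  (E.filter (fun e => x ∈ e)).card

/-- The intersection max-clique of adjacent `u, v`: all plane spanning paths whose
edge set is `u ∩ v` plus one extra edge. -/
def interClique {n : ℕ} (u v : PVert n) : Set (PVert n) :=
  {w | ∃ e, e ∉ u.1 ∩ v.1 ∧ w.1 = insert e (u.1 ∩ v.1)}


/-!
Write `u` as the path `p₀ p₁ … pₙ₋₁` and let `pᵢpᵢ₊₁` be its edge missing from `v`. Then
`u ∩ v` consists of the subpaths `A = p₀ … pᵢ` and `B = pᵢ₊₁ … pₙ₋₁`, and a degree count plus
connectivity show that a spanning path containing them adds a chord from an end of `A` to an end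
of `B`. Because `u` is non-crossing and the points are in convex position, `A` occupies an arc
of consecutive polygon vertices. So such a chord `xy` crosses an edge of `A ∪ B` exactly when
that edge passes over `x` or over `y` on the polygon: the admissible chords form a product
`X × Y` of sets of admissible ends, and each of them is realised by reversing `A` and/or `B`.
The clique therefore has `|X| · |Y|` elements with `|X|, |Y| ≤ 2`, and it contains `u ≠ v`.
-/

lemma _root_.Finset.exists_eq_insert_inter_of_card_sdiff_eq_one {α : Type*} [DecidableEq α]
    {s t : Finset α} (h : (s \ t).card = 1) : ∃ e ∉ s ∩ t, s = insert e (s ∩ t) := by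
  obtain ⟨e, he⟩ := Finset.card_eq_one.1 h
  have hmem := Finset.mem_sdiff.1 (he ▸ Finset.mem_singleton_self e)
  refine ⟨e, fun h => hmem.2 (Finset.mem_inter.1 h).2, ?_⟩
  rw [Finset.insert_eq, ← he, Finset.sdiff_union_inter]

lemma exists_flip_between {P : ℕ → Prop} {a b : ℕ} (h : P a ↔ ¬ P b) :
    ∃ t, min a b ≤ t ∧ t < max a b ∧ (P t ↔ ¬ P (t + 1)) := by
  wlog hab : a ≤ b generalizing a b
  · obtain ⟨t, ht⟩ := this (a := b) (b := a) (by tauto) (by omega)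
    exact ⟨t, by rwa [min_comm, max_comm]⟩
  by_contra! hconst
  have hall : ∀ m, a ≤ m → m ≤ b → (P a ↔ P m) := by
    intro m ham
    induction m, ham using Nat.le_induction with
    | base => simp
    | succ m ham ih =>
      intro hmb
      have := hconst m (by omega) (by omega)
      have := ih (by omega)
      tauto
  have := hall b hab le_rfl
  tauto

section Crossings

variable {n : ℕ}

def offset (α z : Fin n) : ℕ := (z.val + n - α.val) % n

lemma offset_eq (α z : Fin n) :
    offset α z = if α.val ≤ z.val then z.val - α.val else z.val + n - α.val := by
  have := z.isLt
  unfold offset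
  split_ifs
  · rw [show z.val + n - α.val = z.val - α.val + n by omega, Nat.add_mod_right,
      Nat.mod_eq_of_lt (by omega)]
  · exact Nat.mod_eq_of_lt (by omega)

lemma offset_lt (α z : Fin n) : offset α z < n := by
  have := z.isLt; have := α.isLt; rw [offset_eq]; split_ifs <;> omega

lemma offset_inj {α a b : Fin n} : offset α a = offset α b ↔ a = b := by
  have := a.isLt; have := b.isLt; have := α.isLt
  rw [offset_eq, offset_eq, Fin.ext_iff]; split_ifs <;> omega

lemma offset_eq_zero_iff {α z : Fin n} : offset α z = 0 ↔ z = α := by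
  have := z.isLt; have := α.isLt
  rw [offset_eq, Fin.ext_iff]; split_ifs <;> omega

lemma exists_offset_eq (α : Fin n) {t : ℕ} (ht : t < n) : ∃ z, offset α z = t :=
  ⟨pt n (by omega) (α.val + t), by
    have := α.isLt
    simp only [offset_eq, pt]
    rcases lt_or_ge (α.val + t) n with h | h
    · rw [Nat.mod_eq_of_lt h]; split_ifs <;> omega
    · rw [Nat.mod_eq_sub_mod h, Nat.mod_eq_of_lt (by omega)]; split_ifs <;> omega⟩

lemma offset_rebase (α β z : Fin n) :
    offset β z = if offset α β ≤ offset α z then offset α z - offset α β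
      else offset α z + n - offset α β := by
  have := z.isLt; have := α.isLt; have := β.isLt
  rw [offset_eq α z, offset_eq α β, offset_eq β z]
  split_ifs <;> omega

/-- `z` lies strictly inside the arc from `a` to `b` that avoids `α`. -/
def OnArc (α a b z : Fin n) : Prop :=
  min (offset α a) (offset α b) < offset α z ∧ offset α z < max (offset α a) (offset α b)

lemma onArc_comm {α a b z : Fin n} : OnArc α a b z ↔ OnArc α b a z := by
  simp only [OnArc, min_comm, max_comm]

lemma separates_iff_onArc (α : Fin n) {a b c d : Fin n} (hac : a ≠ c) (had : a ≠ d)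
    (hbc : b ≠ c) (hbd : b ≠ d) (hcd : c ≠ d) :
    (offset a c < offset a b ↔ ¬ offset a d < offset a b) ↔
      (OnArc α a b c ↔ ¬ OnArc α a b d) := by
  rw [Ne, ← offset_inj (α := α)] at hac had hbc hbd hcd
  simp only [OnArc, offset_rebase α a]
  have := offset_lt α a; have := offset_lt α b; have := offset_lt α c; have := offset_lt α d
  split_ifs <;> omega

lemma crosses_mk_iff (α : Fin n) {a b c d : Fin n} :
    Crosses s(a, b) s(c, d) ↔ a ≠ b ∧ c ≠ d ∧ a ≠ c ∧ a ≠ d ∧ b ≠ c ∧ b ≠ d ∧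
      (OnArc α a b c ↔ ¬ OnArc α a b d) := by
  constructor
  · rintro ⟨a', b', c', d', he, hf, hab, hcd, hac, had, hbc, hbd, hsep⟩
    have hsep' : OnArc α a' b' c' ↔ ¬ OnArc α a' b' d' :=
      (separates_iff_onArc α hac had hbc hbd hcd).1 hsep
    rcases Sym2.eq_iff.1 he with ⟨rfl, rfl⟩ | ⟨rfl, rfl⟩ <;>
      rcases Sym2.eq_iff.1 hf with ⟨rfl, rfl⟩ | ⟨rfl, rfl⟩ <;>
      simp only [onArc_comm, ne_comm] at * <;> tauto
  · rintro ⟨hab, hcd, hac, had, hbc, hbd, hsep⟩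
    exact ⟨a, b, c, d, rfl, rfl, hab, hcd, hac, had, hbc, hbd,
      (separates_iff_onArc α hac had hbc hbd hcd).2 hsep⟩

lemma not_crosses_self (e : Sym2 (Fin n)) : ¬ Crosses e e := by
  induction e using Sym2.ind with
  | _ a b => simp [crosses_mk_iff a]

lemma Crosses.symm {e f : Sym2 (Fin n)} (h : Crosses e f) : Crosses f e := by
  induction e using Sym2.ind with | _ a b =>
  induction f using Sym2.ind with | _ c d =>
  rw [crosses_mk_iff a] at h ⊢
  obtain ⟨hab, hcd, hac, had, hbc, hbd, hsep⟩ := h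
  refine ⟨hcd, hab, hac.symm, hbc.symm, had.symm, hbd.symm, ?_⟩
  rw [Ne, ← offset_inj (α := a)] at hab hcd hac had hbc hbd
  simp only [OnArc] at hsep ⊢
  omega

lemma crosses_iff_onArc_of_sameSide {α x y s t : Fin n} {i : ℕ} (hx : offset α x ≤ i)
    (hy : i < offset α y) (hside : offset α s ≤ i ↔ offset α t ≤ i) :
    Crosses s(x, y) s(s, t) ↔ OnArc α s t x ∨ OnArc α s t y := by
  simp only [crosses_mk_iff α, Ne, ← offset_inj (α := α), OnArc]
  omega

lemma isNCPath_insert_iff {E : Finset (Sym2 (Fin n))} (hE : ∀ e ∈ E, ∀ f ∈ E, ¬ Crosses e f)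
    {f : Sym2 (Fin n)} :
    IsNCPath (insert f E) ↔ (∃ q, insert f E = pathEdges q) ∧ ∀ g ∈ E, ¬ Crosses f g := by
  simp only [IsNCPath, Finset.forall_mem_insert]
  refine and_congr_right fun _ => ⟨fun h => h.1.2, fun h => ⟨⟨not_crosses_self f, h⟩, ?_⟩⟩
  exact fun g hg => ⟨fun hc => h g hg hc.symm, hE g hg⟩

end Crossings

section Paths

variable {n : ℕ} [NeZero n] (p : Equiv.Perm (Fin n))

def vtx (k : ℕ) : Fin n := p (Fin.ofNat n k)

def pathEdge (k : ℕ) : Sym2 (Fin n) := s(vtx p k, vtx p (k + 1))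

@[simp] lemma vtx_symm (z : Fin n) : vtx p (p.symm z) = z := by
  simp [vtx]

lemma symm_vtx {k : ℕ} (hk : k < n) : (p.symm (vtx p k) : ℕ) = k := by
  simp [vtx, Nat.mod_eq_of_lt hk]

lemma vtx_inj {j k : ℕ} (hj : j < n) (hk : k < n) : vtx p j = vtx p k ↔ j = k := by
  refine ⟨fun h => ?_, fun h => h ▸ rfl⟩
  rw [← symm_vtx p hj, ← symm_vtx p hk, h]

lemma mem_pathEdges {e : Sym2 (Fin n)} :
    e ∈ pathEdges p ↔ ∃ k, k + 1 < n ∧ e = pathEdge p k := by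
  simp only [pathEdges, pathEdge, vtx, Finset.mem_filter, Finset.mem_univ, true_and]
  constructor
  · rintro ⟨i, j, rfl, hj⟩
    refine ⟨i, by omega, ?_⟩
    rw [show Fin.ofNat n i = i by simp,
      show Fin.ofNat n (i + 1) = j by ext; simp [hj, Nat.mod_eq_of_lt (hj ▸ j.isLt)]]
  · rintro ⟨k, hk, rfl⟩
    exact ⟨_, _, rfl, by simp [Nat.mod_eq_of_lt hk, Nat.mod_eq_of_lt (show k < n by omega)]⟩

lemma pathEdge_mem {k : ℕ} (hk : k + 1 < n) : pathEdge p k ∈ pathEdges p :=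
  (mem_pathEdges p).2 ⟨k, hk, rfl⟩

lemma pathEdge_inj {j k : ℕ} (hj : j + 1 < n) (hk : k + 1 < n) :
    pathEdge p j = pathEdge p k ↔ j = k := by
  refine ⟨fun h => ?_, fun h => h ▸ rfl⟩
  rcases Sym2.eq_iff.1 h with ⟨h₁, -⟩ | ⟨h₁, h₂⟩
  · exact (vtx_inj p (by omega) (by omega)).1 h₁
  · have := (vtx_inj p (by omega) (by omega)).1 h₁
    have := (vtx_inj p (by omega) (by omega)).1 h₂
    omega

lemma card_pathEdges : (pathEdges p).card = n - 1 := by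
  have : pathEdges p = (Finset.range (n - 1)).image (pathEdge p) := by
    ext e
    simp only [mem_pathEdges, Finset.mem_image, Finset.mem_range]
    exact ⟨fun ⟨k, hk, he⟩ => ⟨k, by omega, he.symm⟩, fun ⟨k, hk, he⟩ => ⟨k, by omega, he.symm⟩⟩
  rw [this, Finset.card_image_of_injOn, Finset.card_range]
  intro j hj k hk h
  simp only [Finset.coe_range, Set.mem_Iio] at hj hk
  exact (pathEdge_inj p (by omega) (by omega)).1 h

lemma degIn_pathEdges_le_two (z : Fin n) : degIn (pathEdges p) z ≤ 2 := by
  set j : ℕ := (p.symm z : ℕ)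
  have hsub : (pathEdges p).filter (z ∈ ·) ⊆ {pathEdge p (j - 1), pathEdge p j} := by
    intro e he
    obtain ⟨he, hz⟩ := Finset.mem_filter.1 he
    obtain ⟨k, hk, rfl⟩ := (mem_pathEdges p).1 he
    have hj : j = k ∨ j = k + 1 := by
      rcases Sym2.mem_iff.1 hz with rfl | rfl
      · exact Or.inl (symm_vtx p (by omega))
      · exact Or.inr (symm_vtx p hk)
    rcases hj with h | h <;> simp [h]
  exact (Finset.card_le_card hsub).trans Finset.card_le_two

variable {p} in
lemma iff_of_forall_pathEdge {P : Fin n → Prop}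
    (h : ∀ k, k + 1 < n → (P (vtx p k) ↔ P (vtx p (k + 1)))) (z w : Fin n) : P z ↔ P w := by
  by_contra hzw
  obtain ⟨t, -, ht, hflip⟩ := exists_flip_between (P := fun t => P (vtx p t))
    (a := p.symm z) (b := p.symm w) (by simp only [vtx_symm]; tauto)
  have := (p.symm z).isLt; have := (p.symm w).isLt
  have := h t (by omega)
  tauto

/-- The edges of the two subpaths `p₀ … pᵢ` and `pᵢ₊₁ … pₙ₋₁`. -/
def cutEdges (i : ℕ) : Finset (Sym2 (Fin n)) := (pathEdges p).erase (pathEdge p i)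

variable {p} {i : ℕ}

lemma mem_cutEdges (hi : i + 1 < n) {e : Sym2 (Fin n)} :
    e ∈ cutEdges p i ↔ ∃ k, k + 1 < n ∧ k ≠ i ∧ e = pathEdge p k := by
  rw [cutEdges, Finset.mem_erase, mem_pathEdges]
  constructor
  · rintro ⟨hne, k, hk, rfl⟩
    exact ⟨k, hk, fun h => hne (h ▸ rfl), rfl⟩
  · rintro ⟨k, hk, hki, rfl⟩
    exact ⟨fun h => hki ((pathEdge_inj p hk hi).1 h), k, hk, rfl⟩

lemma mk_notMem_cutEdges (hi : i + 1 < n) {a b : ℕ} (ha : a ≤ i) (hb : i < b) (hbn : b < n) :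
    s(vtx p a, vtx p b) ∉ cutEdges p i := by
  rw [mem_cutEdges hi]
  rintro ⟨k, hk, hki, h⟩
  rcases Sym2.eq_iff.1 h with ⟨h₁, h₂⟩ | ⟨h₁, h₂⟩ <;>
    rw [vtx_inj p (by omega) (by omega)] at h₁ h₂ <;> omega

end Paths

section Arcs

variable {n : ℕ} [NeZero n] {p : Equiv.Perm (Fin n)}

/-- The first `k + 1` vertices of `p` are the polygon vertices `α, α + 1, …, α + k`. -/
def IsPrefixArc (p : Equiv.Perm (Fin n)) (α : Fin n) (k : ℕ) : Prop :=
  ∀ m < n, offset α (vtx p m) ≤ k ↔ m ≤ k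

lemma offset_succ_of_isPrefixArc (hNC : ∀ e ∈ pathEdges p, ∀ f ∈ pathEdges p, ¬ Crosses e f)
    {α : Fin n} {k : ℕ} (hk : k + 2 < n) (hα : IsPrefixArc p α k) :
    offset α (vtx p (k + 1)) = k + 1 ∨ offset α (vtx p (k + 1)) = n - 1 := by
  have hw := (hα k (by omega)).2 le_rfl
  have hx : k < offset α (vtx p (k + 1)) :=
    not_le.1 fun h => by have := (hα (k + 1) (by omega)).1 h; omega
  have := offset_lt α (vtx p (k + 1))
  by_contra! hmid
  -- Otherwise the edge `pₖpₖ₊₁` separates the vertices at offsets `k + 1` and `n - 1`, which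
  -- are both visited after `pₖ₊₁`; the path between them has to cross that edge.
  obtain ⟨z₁, hz₁⟩ := exists_offset_eq α (t := k + 1) (by omega)
  obtain ⟨z₂, hz₂⟩ := exists_offset_eq α (t := n - 1) (by omega)
  have late : ∀ z, k < offset α z → z ≠ vtx p (k + 1) → k + 2 ≤ (p.symm z : ℕ) := by
    intro z hz hzx
    have h₁ := hα (p.symm z) (p.symm z).isLt
    have h₂ : (p.symm z : ℕ) ≠ k + 1 := fun h => hzx (by rw [← h, vtx_symm])
    rw [vtx_symm] at h₁
    omega
  have l₁ := late z₁ (by omega) (by rintro rfl; exact hmid.1 hz₁)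
  have l₂ := late z₂ (by omega) (by rintro rfl; exact hmid.2 hz₂)
  obtain ⟨t, ht₁, ht₂, hflip⟩ :=
    exists_flip_between (P := fun t => OnArc α (vtx p k) (vtx p (k + 1)) (vtx p t))
      (a := p.symm z₁) (b := p.symm z₂) (by simp only [vtx_symm, OnArc]; omega)
  have := (p.symm z₁).isLt; have := (p.symm z₂).isLt
  refine hNC _ (pathEdge_mem p (k := k) (by omega)) _ (pathEdge_mem p (k := t) (by omega))
    ((crosses_mk_iff α).2 ⟨?_, ?_, ?_, ?_, ?_, ?_, hflip⟩) <;>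
    rw [Ne, vtx_inj p (by omega) (by omega)] <;> omega

lemma exists_isPrefixArc (hNC : ∀ e ∈ pathEdges p, ∀ f ∈ pathEdges p, ¬ Crosses e f)
    {k : ℕ} (hk : k + 1 < n) : ∃ α, IsPrefixArc p α k := by
  induction k with
  | zero =>
    refine ⟨vtx p 0, fun m hm => ?_⟩
    rw [Nat.le_zero, Nat.le_zero, offset_eq_zero_iff, vtx_inj p hm (NeZero.pos n)]
  | succ k ih =>
    obtain ⟨α, hα⟩ := ih (by omega)
    have hne : ∀ m < n, m ≠ k + 1 → offset α (vtx p m) ≠ offset α (vtx p (k + 1)) :=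
      fun m hm hmk h => hmk ((vtx_inj p hm (by omega)).1 (offset_inj.1 h))
    rcases offset_succ_of_isPrefixArc hNC hk hα with h | h
    · refine ⟨α, fun m hm => ?_⟩
      have := hα m hm
      have := hne m hm
      by_cases hmk : m = k + 1
      · subst hmk; omega
      · omega
    · refine ⟨vtx p (k + 1), fun m hm => ?_⟩
      have := hα m hm
      have := hne m hm
      have := offset_lt α (vtx p m)
      rw [offset_rebase α, h]
      by_cases hmk : m = k + 1
      · subst hmk; split_ifs <;> omega
      · split_ifs <;> omega

end Arcs

section Extensions

variable {n : ℕ} [NeZero n] {p q : Equiv.Perm (Fin n)} {i : ℕ}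

lemma index_of_mem_extension (hi : i + 1 < n) {f : Sym2 (Fin n)} (hf : f ∉ cutEdges p i)
    (hq : pathEdges q = insert f (cutEdges p i)) {z : Fin n} (hz : z ∈ f) :
    (p.symm z : ℕ) = 0 ∨ (p.symm z : ℕ) = i ∨ (p.symm z : ℕ) = i + 1 ∨
      (p.symm z : ℕ) = n - 1 := by
  set j : ℕ := (p.symm z : ℕ)
  by_contra! hjs
  have hjn : j < n := (p.symm z).isLt
  have hleft : pathEdge p (j - 1) ∈ cutEdges p i :=
    (mem_cutEdges hi).2 ⟨j - 1, by omega, by omega, rfl⟩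
  have hright : pathEdge p j ∈ cutEdges p i := (mem_cutEdges hi).2 ⟨j, by omega, by omega, rfl⟩
  -- `z` would be an inner vertex of a subpath, hence of degree three in `q`.
  have hsub : {f, pathEdge p (j - 1), pathEdge p j} ⊆ (pathEdges q).filter (z ∈ ·) := by
    have hzj : vtx p j = z := vtx_symm p z
    simp only [Finset.insert_subset_iff, Finset.singleton_subset_iff, Finset.mem_filter, hq,
      Finset.mem_insert_self, Finset.mem_insert_of_mem hleft, Finset.mem_insert_of_mem hright,
      hz, true_and]
    constructor
    · rw [pathEdge, Nat.sub_add_cancel (by omega), hzj]; exact Sym2.mem_mk_right _ _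
    · rw [pathEdge, hzj]; exact Sym2.mem_mk_left _ _
  have hcard : ({f, pathEdge p (j - 1), pathEdge p j} : Finset _).card = 3 := by
    refine Finset.card_eq_three.2 ⟨_, _, _, by rintro rfl; exact hf hleft,
      by rintro rfl; exact hf hright, fun h => ?_, rfl⟩
    have := (pathEdge_inj p (by omega) (by omega)).1 h
    omega
  have := (Finset.card_le_card hsub).trans (degIn_pathEdges_le_two q z)
  omega

lemma sides_ne_of_extension (hi : i + 1 < n) {z w : Fin n}
    (hq : pathEdges q = insert s(z, w) (cutEdges p i)) :
    ¬ ((p.symm z : ℕ) ≤ i ↔ (p.symm w : ℕ) ≤ i) := by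
  intro hzw
  -- Otherwise no edge of `q` would leave the subpath `p₀ … pᵢ`.
  have := iff_of_forall_pathEdge (p := q) (P := fun z => (p.symm z : ℕ) ≤ i) ?_
    (vtx p 0) (vtx p (n - 1))
  · simp only [symm_vtx p (NeZero.pos n), symm_vtx p (show n - 1 < n by omega)] at this
    omega
  intro k hk
  have hmem := pathEdge_mem q hk
  rw [hq, Finset.mem_insert, mem_cutEdges hi] at hmem
  rcases hmem with h | ⟨k', hk', hki, h⟩
  · rcases Sym2.eq_iff.1 h with ⟨h₁, h₂⟩ | ⟨h₁, h₂⟩ <;> simp only [h₁, h₂, hzw]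
  · rcases Sym2.eq_iff.1 h with ⟨h₁, h₂⟩ | ⟨h₁, h₂⟩ <;>
      simp only [h₁, h₂, symm_vtx p (show k' < n by omega), symm_vtx p hk'] <;> omega

lemma exists_eq_mk_of_extension (hi : i + 1 < n) {f : Sym2 (Fin n)} (hf : f ∉ cutEdges p i)
    (hq : pathEdges q = insert f (cutEdges p i)) :
    ∃ a b, (a = 0 ∨ a = i) ∧ (b = i + 1 ∨ b = n - 1) ∧ f = s(vtx p a, vtx p b) := by
  obtain ⟨j, hj, rfl⟩ := (mem_pathEdges q).1 (hq ▸ Finset.mem_insert_self _ _)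
  have hside := sides_ne_of_extension hi hq
  have hz := index_of_mem_extension hi hf hq (Sym2.mem_mk_left _ _)
  have hw := index_of_mem_extension hi hf hq (Sym2.mem_mk_right _ _)
  by_cases h : (p.symm (vtx q j) : ℕ) ≤ i
  · have : ¬ (p.symm (vtx q (j + 1)) : ℕ) ≤ i := by tauto
    exact ⟨p.symm (vtx q j), p.symm (vtx q (j + 1)), by omega, by omega,
      by simp only [vtx_symm, pathEdge]⟩
  · have : (p.symm (vtx q (j + 1)) : ℕ) ≤ i := by tauto
    exact ⟨p.symm (vtx q (j + 1)), p.symm (vtx q j), by omega, by omega,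
      by simp only [vtx_symm, pathEdge, Sym2.eq_swap]⟩

end Extensions

section BlockReversal

def blockRev (n i : ℕ) (revL revR : Bool) (k : ℕ) : ℕ :=
  if k ≤ i then (if revL then i - k else k) else (if revR then n + i - k else k)

variable {n i : ℕ}

lemma blockRev_lt (hi : i < n) (revL revR : Bool) {k : ℕ} (hk : k < n) :
    blockRev n i revL revR k < n := by
  unfold blockRev; split_ifs <;> omega

lemma blockRev_blockRev (revL revR : Bool) {k : ℕ} (hk : k < n) :
    blockRev n i revL revR (blockRev n i revL revR k) = k := by
  unfold blockRev; split_ifs <;> omega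

def blockRevPerm (i : ℕ) (hi : i < n) (revL revR : Bool) : Equiv.Perm (Fin n) :=
  Function.Involutive.toPerm
    (fun k => ⟨blockRev n i revL revR k, blockRev_lt hi revL revR k.isLt⟩)
    fun k => Fin.ext (blockRev_blockRev revL revR k.isLt)

lemma val_blockRevPerm (hi : i < n) (revL revR : Bool) (k : Fin n) :
    (blockRevPerm i hi revL revR k : ℕ) = blockRev n i revL revR k :=
  rfl

variable (p : Equiv.Perm (Fin n))

lemma blockRevPerm_trans_blockRevPerm_trans (hi : i < n) (revL revR : Bool) :
    (blockRevPerm i hi revL revR).trans ((blockRevPerm i hi revL revR).trans p) = p := by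
  refine Equiv.ext fun k => ?_
  simp only [Equiv.trans_apply]
  congr 1
  ext
  rw [val_blockRevPerm, val_blockRevPerm, blockRev_blockRev revL revR k.isLt]

variable [NeZero n]

lemma vtx_blockRevPerm_trans (hi : i < n) (revL revR : Bool) {k : ℕ} (hk : k < n) :
    vtx ((blockRevPerm i hi revL revR).trans p) k = vtx p (blockRev n i revL revR k) := by
  simp only [vtx, Equiv.trans_apply]
  congr 1
  ext
  simp [val_blockRevPerm, Nat.mod_eq_of_lt hk, Nat.mod_eq_of_lt (blockRev_lt hi revL revR hk)]

lemma pathEdge_blockRevPerm_trans (hi : i + 1 < n) (revL revR : Bool) {k : ℕ} (hk : k + 1 < n)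
    (hki : k ≠ i) : ∃ k', k' + 1 < n ∧ k' ≠ i ∧
      pathEdge ((blockRevPerm i (by omega) revL revR).trans p) k = pathEdge p k' := by
  obtain ⟨k', hk', hk'i, h | h⟩ : ∃ k', k' + 1 < n ∧ k' ≠ i ∧
      ((blockRev n i revL revR k = k' ∧ blockRev n i revL revR (k + 1) = k' + 1) ∨
        (blockRev n i revL revR k = k' + 1 ∧ blockRev n i revL revR (k + 1) = k')) := by
    refine ⟨min (blockRev n i revL revR k) (blockRev n i revL revR (k + 1)), ?_⟩
    unfold blockRev; split_ifs <;> omega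
  all_goals
    refine ⟨k', hk', hk'i, ?_⟩
    rw [pathEdge, pathEdge, vtx_blockRevPerm_trans p _ _ _ (by omega),
      vtx_blockRevPerm_trans p _ _ _ hk, h.1, h.2]
  exact Sym2.eq_swap

lemma pathEdge_blockRevPerm_trans_self (hi : i + 1 < n) (revL revR : Bool) :
    pathEdge ((blockRevPerm i (by omega) revL revR).trans p) i =
      s(vtx p (if revL then 0 else i), vtx p (if revR then n - 1 else i + 1)) := by
  rw [pathEdge, vtx_blockRevPerm_trans p _ _ _ (by omega), vtx_blockRevPerm_trans p _ _ _ hi]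
  unfold blockRev
  cases revL <;> cases revR <;> simp [show n + i - (i + 1) = n - 1 by omega]

lemma cutEdges_blockRevPerm_trans_subset (hi : i + 1 < n) (revL revR : Bool) :
    cutEdges ((blockRevPerm i (by omega) revL revR).trans p) i ⊆ cutEdges p i := by
  intro e he
  obtain ⟨k, hk, hki, rfl⟩ := (mem_cutEdges hi).1 he
  obtain ⟨k', hk', hk'i, h⟩ := pathEdge_blockRevPerm_trans p hi revL revR hk hki
  exact (mem_cutEdges hi).2 ⟨k', hk', hk'i, h⟩

lemma cutEdges_blockRevPerm_trans (hi : i + 1 < n) (revL revR : Bool) :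
    cutEdges ((blockRevPerm i (by omega) revL revR).trans p) i = cutEdges p i := by
  refine (cutEdges_blockRevPerm_trans_subset p hi revL revR).antisymm ?_
  calc cutEdges p i
      = cutEdges ((blockRevPerm i (by omega) revL revR).trans
          ((blockRevPerm i (by omega) revL revR).trans p)) i := by
        rw [blockRevPerm_trans_blockRevPerm_trans]
    _ ⊆ _ := cutEdges_blockRevPerm_trans_subset _ hi revL revR

lemma exists_pathEdges_eq_insert (hi : i + 1 < n) {a b : ℕ} (ha : a = 0 ∨ a = i)
    (hb : b = i + 1 ∨ b = n - 1) :
    ∃ q : Equiv.Perm (Fin n), pathEdges q = insert s(vtx p a, vtx p b) (cutEdges p i) := by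
  set q := (blockRevPerm i (by omega) (decide (a ≠ i)) (decide (b ≠ i + 1))).trans p
  have hqi : pathEdge q i = s(vtx p a, vtx p b) := by
    rw [pathEdge_blockRevPerm_trans_self p hi]
    congr 2 <;> split_ifs <;> simp_all
  refine ⟨q, ?_⟩
  rw [← hqi, ← cutEdges_blockRevPerm_trans p hi, cutEdges, Finset.insert_erase (pathEdge_mem q hi)]

end BlockReversal

section Counting

variable {n : ℕ} [NeZero n] {p : Equiv.Perm (Fin n)} {i : ℕ}

def Covered (p : Equiv.Perm (Fin n)) (i : ℕ) (α x : Fin n) : Prop :=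
  ∃ k, k + 1 < n ∧ k ≠ i ∧ OnArc α (vtx p k) (vtx p (k + 1)) x

lemma forall_not_crosses_iff {α : Fin n} (hα : IsPrefixArc p α i) (hi : i + 1 < n) {a b : ℕ}
    (ha : a ≤ i) (hb : i < b) (hbn : b < n) :
    (∀ g ∈ cutEdges p i, ¬ Crosses s(vtx p a, vtx p b) g) ↔
      ¬ Covered p i α (vtx p a) ∧ ¬ Covered p i α (vtx p b) := by
  have hcross : ∀ k, k + 1 < n → k ≠ i → (Crosses s(vtx p a, vtx p b) (pathEdge p k) ↔
      OnArc α (vtx p k) (vtx p (k + 1)) (vtx p a) ∨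
        OnArc α (vtx p k) (vtx p (k + 1)) (vtx p b)) := by
    intro k hk hki
    have := hα k (by omega); have := hα (k + 1) hk
    refine crosses_iff_onArc_of_sameSide ((hα a (by omega)).2 ha) ?_ (by omega)
    exact not_le.1 fun h => by have := (hα b hbn).1 h; omega
  simp only [mem_cutEdges hi, Covered]
  constructor
  · intro h
    constructor <;> rintro ⟨k, hk, hki, hon⟩ <;>
      exact h _ ⟨k, hk, hki, rfl⟩ ((hcross k hk hki).2 (by tauto))
  · rintro ⟨hA, hB⟩ g ⟨k, hk, hki, rfl⟩ hc
    rcases (hcross k hk hki).1 hc with h | h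
    · exact hA ⟨k, hk, hki, h⟩
    · exact hB ⟨k, hk, hki, h⟩

lemma isNCPath_insert_mk_iff (hNC : ∀ e ∈ pathEdges p, ∀ f ∈ pathEdges p, ¬ Crosses e f)
    {α : Fin n} (hα : IsPrefixArc p α i) (hi : i + 1 < n) {a b : ℕ} (ha : a = 0 ∨ a = i)
    (hb : b = i + 1 ∨ b = n - 1) :
    IsNCPath (insert s(vtx p a, vtx p b) (cutEdges p i)) ↔
      ¬ Covered p i α (vtx p a) ∧ ¬ Covered p i α (vtx p b) := by
  have hcut : ∀ e ∈ cutEdges p i, ∀ f ∈ cutEdges p i, ¬ Crosses e f :=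
    fun e he f hf => hNC e (Finset.mem_of_mem_erase he) f (Finset.mem_of_mem_erase hf)
  obtain ⟨q, hq⟩ := exists_pathEdges_eq_insert p hi ha hb
  rw [isNCPath_insert_iff hcut, forall_not_crosses_iff hα hi (by omega) (by omega) (by omega)]
  exact and_iff_right ⟨q, hq.symm⟩

lemma exists_ncard_extensions_eq_mul
    (hNC : ∀ e ∈ pathEdges p, ∀ f ∈ pathEdges p, ¬ Crosses e f) (hi : i + 1 < n) :
    ∃ a b, a ≤ 2 ∧ b ≤ 2 ∧
      {e | e ∉ cutEdges p i ∧ IsNCPath (insert e (cutEdges p i))}.ncard = a * b := by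
  obtain ⟨α, hα⟩ := exists_isPrefixArc hNC hi
  set A : Set ℕ := {a | (a = 0 ∨ a = i) ∧ ¬ Covered p i α (vtx p a)}
  set B : Set ℕ := {b | (b = i + 1 ∨ b = n - 1) ∧ ¬ Covered p i α (vtx p b)}
  have hext : {e | e ∉ cutEdges p i ∧ IsNCPath (insert e (cutEdges p i))} =
      (fun ab : ℕ × ℕ => s(vtx p ab.1, vtx p ab.2)) '' (A ×ˢ B) := by
    ext e
    constructor
    · rintro ⟨he, hnc⟩
      obtain ⟨q, hq⟩ := hnc.1
      obtain ⟨a, b, ha, hb, rfl⟩ := exists_eq_mk_of_extension hi he hq.symm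
      have := (isNCPath_insert_mk_iff hNC hα hi ha hb).1 hnc
      exact ⟨(a, b), ⟨⟨ha, this.1⟩, ⟨hb, this.2⟩⟩, rfl⟩
    · rintro ⟨⟨a, b⟩, ⟨⟨ha, hva⟩, ⟨hb, hvb⟩⟩, rfl⟩
      exact ⟨mk_notMem_cutEdges hi (by omega) (by omega) (by omega),
        (isNCPath_insert_mk_iff hNC hα hi ha hb).2 ⟨hva, hvb⟩⟩
  have hinj : Set.InjOn (fun ab : ℕ × ℕ => s(vtx p ab.1, vtx p ab.2)) (A ×ˢ B) := by
    rintro ⟨a, b⟩ ⟨⟨ha, -⟩, ⟨hb, -⟩⟩ ⟨a', b'⟩ ⟨⟨ha', -⟩, ⟨hb', -⟩⟩ h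
    rcases Sym2.eq_iff.1 h with ⟨h₁, h₂⟩ | ⟨h₁, -⟩
    · rw [vtx_inj p (by omega) (by omega)] at h₁ h₂
      exact Prod.ext h₁ h₂
    · rw [vtx_inj p (by omega) (by omega)] at h₁
      omega
  refine ⟨A.ncard, B.ncard, ?_, ?_, by rw [hext, hinj.ncard_image, Set.ncard_prod]⟩
  · exact (Set.ncard_le_ncard (t := {0, i}) (fun a ha => ha.1)).trans
      ((Set.ncard_insert_le _ _).trans (by simp))
  · exact (Set.ncard_le_ncard (t := {i + 1, n - 1}) (fun b hb => hb.1)).trans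
      ((Set.ncard_insert_le _ _).trans (by simp))

end Counting

section Clique

variable {n : ℕ}

lemma ncard_interClique (u v : PVert n) :
    (interClique u v).ncard = {e | e ∉ u.1 ∩ v.1 ∧ IsNCPath (insert e (u.1 ∩ v.1))}.ncard := by
  refine (Set.ncard_congr (fun e he => (⟨insert e (u.1 ∩ v.1), he.2⟩ : PVert n))
    (fun e he => Set.mem_ofPred.2 ⟨e, he.1, rfl⟩) (fun e f he _ h => ?_) ?_).symm
  · have h' : insert e (u.1 ∩ v.1) = insert f (u.1 ∩ v.1) := congrArg Subtype.val h
    exact (Finset.mem_insert.1 (h' ▸ Finset.mem_insert_self e _)).resolve_right he.1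
  · rintro w ⟨e, he, hw⟩
    exact ⟨e, ⟨he, hw ▸ w.2⟩, Subtype.ext hw.symm⟩

lemma mem_interClique_of_adj [NeZero n] {u v : PVert n} (huv : (pathGraph n).Adj u v) :
    u ∈ interClique u v ∧ v ∈ interClique u v := by
  obtain ⟨p, hp⟩ := u.2.1
  obtain ⟨q, hq⟩ := v.2.1
  have hcard : u.1.card = v.1.card := by rw [hp, hq, card_pathEdges, card_pathEdges]
  have hsum : (u.1 \ v.1).card + (v.1 \ u.1).card = 2 := by
    rw [← Finset.card_union_of_disjoint disjoint_sdiff_sdiff]; exact huv.2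
  have hu := Finset.card_sdiff_add_card_inter u.1 v.1
  have hv := Finset.card_sdiff_add_card_inter v.1 u.1
  rw [Finset.inter_comm] at hv
  refine ⟨Finset.exists_eq_insert_inter_of_card_sdiff_eq_one (by omega), ?_⟩
  obtain ⟨e, he, h⟩ :=
    Finset.exists_eq_insert_inter_of_card_sdiff_eq_one (s := v.1) (t := u.1) (by omega)
  rw [Finset.inter_comm] at he h
  exact ⟨e, he, h⟩

end Clique

theorem interClique_card_general (n : ℕ) (u v : PVert n)
    (huv : (pathGraph n).Adj u v) :
    (interClique u v).ncard = 2 ∨ (interClique u v).ncard = 4 := by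
  have : NeZero n := ⟨by rintro rfl; exact huv.ne (Subtype.ext (Subsingleton.elim _ _))⟩
  obtain ⟨hu, hv⟩ := mem_interClique_of_adj huv
  have h2 : 2 ≤ (interClique u v).ncard := by
    rw [← Set.ncard_pair huv.ne]
    exact Set.ncard_le_ncard (Set.insert_subset_iff.2 ⟨hu, Set.singleton_subset_iff.2 hv⟩)
  obtain ⟨⟨p, hp⟩, hNC⟩ := u.2
  obtain ⟨e, he, hue⟩ := hu
  obtain ⟨i, hi, rfl⟩ := (mem_pathEdges p).1 (hp ▸ hue ▸ Finset.mem_insert_self _ _)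
  have hcut : u.1 ∩ v.1 = cutEdges p i := by
    rw [cutEdges, ← hp, ← Finset.erase_insert he, ← hue]
  obtain ⟨a, b, ha, hb, hab⟩ := exists_ncard_extensions_eq_mul (hp ▸ hNC) hi
  rw [ncard_interClique, hcut, hab] at h2 ⊢
  interval_cases a <;> interval_cases b <;> omega

/-- For `n ≥ 5` points in convex position, every intersection max-clique of `G(P)`
has size 2 or 4. -/
theorem interClique_card (n : ℕ) (hn : 5 ≤ n) (u v : PVert n)
    (huv : (pathGraph n).Adj u v) :
    (interClique u v).ncard = 2 ∨ (interClique u v).ncard = 4 :=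
  interClique_card_general n u v huv

end PG
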